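/- The constructed instance I' always admits a feasible matching. More specifically, for every set X' ⊆ X ∪ X̄ containing exactly one of {x_i, x̄_i} for each i ∈ [r], the matching M with M(v) = X' ∪ Y ∪ Ȳ ∪ D', where D' = {d_j : exactly two literals of C_j lie in X' ∪ Y ∪ Ȳ}, M(w) = {d}, M(a) = {r2} and M(b) = ({r1, r3} ∪ X ∪ X̄) ∖ X', is feasible. -/

import Mathlib

open scoped Classical

noncomputable section

/-- An SMTI-Diverse instance: students `S`, colleges `C`, types `T`.
Preferences are encoded by rank functions (smaller rank = more preferred);
ties are allowed.  `acc` is the (symmetric) acceptability relation, `tau`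
the 0/1 type vectors (encoded as `Bool`), `lq`/`uq` the lower/upper quota
vectors and `cap` the capacities. -/
structure SMTI (S C T : Type) [Fintype S] [Fintype C] [Fintype T] where
  acc : S → C → Prop
  tau : S → T → Bool
  rankS : S → C → ℕ
  rankC : C → S → ℕ
  lq : C → T → ℕ
  uq : C → T → ℕ
  cap : C → ℕ

namespace SMTI

variable {S C T : Type} [Fintype S] [Fintype C] [Fintype T]

/-- `f : S → Option C` encodes a matching: every assigned college is acceptable. -/
def IsMatching (I : SMTI S C T) (f : S → Option C) : Prop :=
  ∀ u w, f u = some w → I.acc u w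

/-- The set `M(w)` of students assigned to college `w`. -/
def assigned (I : SMTI S C T) (f : S → Option C) (w : C) : Finset S :=
  Finset.univ.filter fun u => f u = some w

/-- The number of students of type `z` assigned to `w`. -/
def typeLoad (I : SMTI S C T) (f : S → Option C) (w : C) (z : T) : ℕ :=
  ∑ u ∈ I.assigned f w, (I.tau u z).toNat

/-- Feasibility: capacities respected and quotas met at all colleges. -/
def Feasible (I : SMTI S C T) (f : S → Option C) : Prop :=
  ∀ w, (I.assigned f w).card ≤ I.cap w ∧
    ∀ z, I.lq w z ≤ I.typeLoad f w z ∧ I.typeLoad f w z ≤ I.uq w z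

/-- `u` strictly prefers `w` to its assigned college (in particular if unmatched). -/
def PrefersTo (I : SMTI S C T) (f : S → Option C) (u : S) (w : C) : Prop :=
  ∀ w', f u = some w' → I.rankS u w < I.rankS u w'

/-- `{u,w}` is a blocking pair of `f` witnessed by `U' ⊆ M(w)`. -/
def BlocksWith (I : SMTI S C T) (f : S → Option C) (u : S) (w : C) (U' : Finset S) : Prop :=
  f u ≠ some w ∧ I.acc u w ∧ I.PrefersTo f u w ∧
  U' ⊆ I.assigned f w ∧
  (∀ u' ∈ U', I.rankC w u < I.rankC w u') ∧
  (I.assigned f w \ U').card + 1 ≤ I.cap w ∧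
  ∀ z, I.lq w z ≤ (I.tau u z).toNat + ∑ u' ∈ I.assigned f w \ U', (I.tau u' z).toNat ∧
    (I.tau u z).toNat + ∑ u' ∈ I.assigned f w \ U', (I.tau u' z).toNat ≤ I.uq w z

/-- `{u,w}` is a blocking pair of `f` (with some witness). -/
def BlockingPair (I : SMTI S C T) (f : S → Option C) (u : S) (w : C) : Prop :=
  ∃ U', I.BlocksWith f u w U'

/-- Stability: no blocking pair at all. -/
def Stable (I : SMTI S C T) (f : S → Option C) : Prop :=
  ∀ u w, ¬ I.BlockingPair f u w

end SMTI

section IPrimeConstruction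

/-- A literal: polarity (`true` = positive) and a variable
(`Sum.inl i` = `x_{i+1} ∈ X`, `Sum.inr i` = `y ∈ Y`). -/
abbrev XLit (r : ℕ) := Bool × (Fin r ⊕ Fin r)

/-- Students of `I'`: literal students `Sum.inl l`; clause students
`d_j = Sum.inr (Sum.inl j)`; special students `d = Sum.inr (Sum.inr 0)`,
`r1 = Sum.inr (Sum.inr 1)`, `r2 = Sum.inr (Sum.inr 2)`, `r3 = Sum.inr (Sum.inr 3)`. -/
abbrev StP (r s : ℕ) := XLit r ⊕ (Fin s ⊕ Fin 4)

/-- Colleges of `I'`: `v = 0`, `w = 1`, `a = 2`, `b = 3`. -/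
abbrev ColP := Fin 4

/-- Types of `I'`: variable types (`X` on the left, `Y` on the right),
clause types, and two special types. -/
abbrev TyP (r s : ℕ) := (Fin r ⊕ Fin r) ⊕ (Fin s ⊕ Fin 2)

/-- Truth value of a literal under assignments `σX`, `σY`. -/
def evalXLit {r : ℕ} (σX σY : Fin r → Bool) (l : XLit r) : Bool :=
  if l.1 then Sum.elim σX σY l.2 else !(Sum.elim σX σY l.2)

/-- Block index of a student in college `v`'s preference list:
`[D] ≻ d ≻ [Y] ≻ [Ȳ] ≻ [X̄] ≻ [X]`. -/
def blockV (r s : ℕ) : StP r s → ℕ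
  | Sum.inr (Sum.inl _) => 0
  | Sum.inr (Sum.inr k) => if k = 0 then 1 else 9
  | Sum.inl (pol, Sum.inr _) => if pol then 2 else 3
  | Sum.inl (pol, Sum.inl _) => if pol then 5 else 4

/-- Block index of a student in college `b`'s preference list:
`r3 ≻ r2 ≻ r1 ≻ [X] ≻ [X̄]`. -/
def blockB (r s : ℕ) : StP r s → ℕ
  | Sum.inr (Sum.inr k) => if k = 3 then 0 else if k = 2 then 1 else if k = 1 then 2 else 9
  | Sum.inl (pol, Sum.inl _) => if pol then 3 else 4
  | _ => 9

/-- `rk` realizes an "arbitrary fixed strict order within the blocks" given by `blk`. -/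
def RealizesBlocks {r s : ℕ} (blk : StP r s → ℕ) (rk : StP r s → ℕ) : Prop :=
  Function.Injective rk ∧ ∀ s1 s2 : StP r s, blk s1 < blk s2 → rk s1 < rk s2

/-- The quota vector of college `v`: `1^r 2^r 3^s 0 0` (both lower and upper). -/
def quotaV (r s : ℕ) : TyP r s → ℕ
  | Sum.inl (Sum.inl _) => 1
  | Sum.inl (Sum.inr _) => 2
  | Sum.inr (Sum.inl _) => 3
  | Sum.inr (Sum.inr _) => 0

/-- The instance `I'` from the Σ₂ᵖ-hardness construction, parameterized by the
clauses `cl` and by arbitrary fixed strict orders `rkV` (for `v`) and `rkB`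
(for `b`) within the blocks. -/
def IPrime (r s : ℕ) (cl : Fin s → Fin 3 → XLit r) (rkV rkB : StP r s → ℕ) :
    SMTI (StP r s) ColP (TyP r s) where
  acc := fun st c =>
    match st with
    | Sum.inl (_, Sum.inl _) => c = 0 ∨ c = 3        -- X-literal students: v and b
    | Sum.inl (_, Sum.inr _) => c = 0                -- Y-literal students: only v
    | Sum.inr (Sum.inl _) => c = 0                   -- clause students: only v
    | Sum.inr (Sum.inr k) =>
        if k = 0 then (c = 0 ∨ c = 1)                -- d: v and w
        else if k = 2 then (c = 1 ∨ c = 2 ∨ c = 3)   -- r2: b, w, a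
        else (c = 2 ∨ c = 3)                         -- r1, r3: a and b
  tau := fun st t =>
    match st, t with
    | Sum.inl l, Sum.inl vt => decide (l.2 = vt)
    | Sum.inl l, Sum.inr (Sum.inl j) => decide (∃ z : Fin 3, cl j z = l)
    | Sum.inl _, Sum.inr (Sum.inr _) => false
    | Sum.inr (Sum.inl _), Sum.inl _ => false
    | Sum.inr (Sum.inl j), Sum.inr (Sum.inl j') => decide (j = j')
    | Sum.inr (Sum.inl _), Sum.inr (Sum.inr _) => false
    | Sum.inr (Sum.inr k), Sum.inl _ => decide (k = 0)          -- d has all variable types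
    | Sum.inr (Sum.inr k), Sum.inr (Sum.inl _) => decide (k = 0) -- d has all clause types
    | Sum.inr (Sum.inr k), Sum.inr (Sum.inr z) =>
        -- special types: d : 00, r1 : 10, r2 : 11, r3 : 01
        if k = 1 then decide (z = 0)
        else if k = 2 then true
        else if k = 3 then decide (z = 1)
        else false
  rankS := fun st c =>
    match st with
    | Sum.inl (pol, Sum.inl _) =>
        -- x_i : v ≻ b ;  x̄_i : b ≻ v
        if pol then (if c = 0 then 0 else if c = 3 then 1 else 9)
        else (if c = 3 then 0 else if c = 0 then 1 else 9)
    | Sum.inl (_, Sum.inr _) => if c = 0 then 0 else 9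
    | Sum.inr (Sum.inl _) => if c = 0 then 0 else 9
    | Sum.inr (Sum.inr k) =>
        if k = 0 then (if c = 0 then 0 else if c = 1 then 1 else 9)       -- d : v ≻ w
        else if k = 1 then (if c = 3 then 0 else if c = 2 then 1 else 9)  -- r1 : b ≻ a
        else if k = 2 then
          (if c = 3 then 0 else if c = 1 then 1 else if c = 2 then 2 else 9) -- r2 : b ≻ w ≻ a
        else (if c = 2 then 0 else if c = 3 then 1 else 9)                -- r3 : a ≻ b
  rankC := fun c st =>
    if c = 0 then rkV st
    else if c = 1 then
      -- w : d ≻ r2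
      (if st = Sum.inr (Sum.inr 0) then 0 else if st = Sum.inr (Sum.inr 2) then 1 else 9)
    else if c = 2 then
      -- a : r1 ≻ r2 ≻ r3
      (if st = Sum.inr (Sum.inr 1) then 0 else if st = Sum.inr (Sum.inr 2) then 1
       else if st = Sum.inr (Sum.inr 3) then 2 else 9)
    else rkB st
  lq := fun c t =>
    if c = 0 then quotaV r s t
    else if c = 3 then (match t with | Sum.inl (Sum.inl _) => 1 | _ => 0)
    else 0
  uq := fun c t =>
    if c = 0 then quotaV r s t
    else if c = 1 then 1
    else if c = 2 then (match t with | Sum.inr (Sum.inr _) => 1 | _ => 0)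
    else (match t with
          | Sum.inl (Sum.inl _) => 1
          | Sum.inl (Sum.inr _) => 0
          | Sum.inr (Sum.inl _) => 1
          | Sum.inr (Sum.inr _) => 1)
  cap := fun c =>
    if c = 0 then 3 * r + s else if c = 1 then 1 else if c = 2 then 1 else r + 2

end IPrimeConstruction

/-- Whether literal `l` is "selected", i.e. its literal student goes to `v`:
`x_i ∈ X'` iff `g i = true`, `x̄_i ∈ X'` iff `g i = false`, and all
`Y`-literal students always go to `v`. -/
def selLit {r : ℕ} (g : Fin r → Bool) (l : XLit r) : Bool :=
  match l.2 with
  | Sum.inl i => l.1 == g i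
  | Sum.inr _ => true

/-- The matching of Statement 7: `M(v) = X' ∪ Y ∪ Ȳ ∪ D'` where
`D' = {d_j : exactly two literals of C_j lie in X' ∪ Y ∪ Ȳ}`, `M(w) = {d}`,
`M(a) = {r2}`, `M(b) = ({r1, r3} ∪ X ∪ X̄) ∖ X'`. -/
def matchSpec (r s : ℕ) (cl : Fin s → Fin 3 → XLit r) (g : Fin r → Bool) :
    StP r s → Option ColP := fun st =>
  match st with
  | Sum.inl l => if selLit g l then some 0 else some 3
  | Sum.inr (Sum.inl j) =>
      if (Finset.univ.filter fun z : Fin 3 => selLit g (cl j z) = true).card = 2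
      then some 0 else none
  | Sum.inr (Sum.inr k) => if k = 0 then some 1 else if k = 2 then some 2 else some 3

/-!
Feasibility is checked college by college. At `v`, the set `X'` holds exactly one literal of each
`X`-variable and `Y ∪ Ȳ` both literals of each `Y`-variable. A clause has at least two literals
over `Y`, so two or three of its literals sit at `v`, and `d_j` joins exactly when there are two:
every clause type is met exactly three times. At `b`, `(X ∪ X̄) ∖ X'` meets each `X`-variable
once and each clause at most once, while `r1` and `r3` supply the two special types. The colleges
`w` and `a` each hold a single student whose type vector fits their quotas.
-/

open Finset

namespace SMTI

variable {S C T : Type} [Fintype S] [Fintype C] [Fintype T] (I : SMTI S C T) (f : S → Option C)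

def FeasibleAt (w : C) : Prop :=
  #(I.assigned f w) ≤ I.cap w ∧
    ∀ z, I.lq w z ≤ I.typeLoad f w z ∧ I.typeLoad f w z ≤ I.uq w z

theorem feasible_iff_forall_feasibleAt : I.Feasible f ↔ ∀ w, I.FeasibleAt f w := Iff.rfl

theorem mem_assigned {u : S} {w : C} : u ∈ I.assigned f w ↔ f u = some w := by
  simp [assigned]

theorem card_assigned_eq_sum (w : C) :
    #(I.assigned f w) = ∑ u, if f u = some w then 1 else 0 := by
  rw [assigned, card_filter]

theorem typeLoad_eq_sum (w : C) (z : T) :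
    I.typeLoad f w z = ∑ u, if f u = some w then (I.tau u z).toNat else 0 := by
  rw [typeLoad, assigned, sum_filter]

theorem feasibleAt_of_assigned_eq_singleton {w : C} {u : S} (hu : I.assigned f w = {u})
    (hcap : 1 ≤ I.cap w)
    (hquota : ∀ z, I.lq w z ≤ (I.tau u z).toNat ∧ (I.tau u z).toNat ≤ I.uq w z) :
    I.FeasibleAt f w := by
  simpa [FeasibleAt, typeLoad, hu] using ⟨hcap, hquota⟩

end SMTI

theorem Bool.toNat_decide (p : Prop) [Decidable p] : (decide p).toNat = if p then 1 else 0 :=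
  apply_ite Bool.toNat p true false

theorem ite_eq_true_add_ite_eq_false {M : Type*} [AddZeroClass M] (b : Bool) (a : M) :
    ((if b = true then a else 0) + if b = false then a else 0) = a := by
  cases b <;> simp

theorem ite_eq_false_add_ite_eq_true {M : Type*} [AddZeroClass M] (b : Bool) (a : M) :
    ((if b = false then a else 0) + if b = true then a else 0) = a := by
  cases b <;> simp

theorem sum_ite_ite_exists_eq_card {ι α : Type*} [Fintype ι] [Fintype α] {c : ι → α}
    (hc : Function.Injective c) (p : α → Prop) [DecidablePred p]
    [∀ a, Decidable (∃ z, c z = a)] :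
    (∑ a, if p a then (if ∃ z, c z = a then 1 else 0) else 0) = #{z | p (c z)} := by
  classical
  simp_rw [← ite_and, ← card_filter]
  rw [← card_image_of_injective _ hc]
  congr 1
  ext a
  simp only [mem_filter, mem_univ, true_and, mem_image]
  constructor
  · rintro ⟨hp, z, rfl⟩
    exact ⟨z, hp, rfl⟩
  · rintro ⟨z, hp, rfl⟩
    exact ⟨hp, z, rfl⟩

theorem sum_univ_StP {r s : ℕ} (F : StP r s → ℕ) :
    ∑ u, F u =
      (∑ i, (F (.inl (true, .inl i)) + F (.inl (false, .inl i))) +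
        ∑ i, (F (.inl (true, .inr i)) + F (.inl (false, .inr i)))) +
      (∑ j, F (.inr (.inl j)) +
        (F (.inr (.inr 0)) + F (.inr (.inr 1)) + F (.inr (.inr 2)) + F (.inr (.inr 3)))) := by
  simp only [Fintype.sum_sum_type, Fintype.sum_prod_type_right, Fintype.sum_bool,
    Fin.sum_univ_four]

@[simp] theorem selLit_inl {r : ℕ} (g : Fin r → Bool) (b : Bool) (i : Fin r) :
    selLit g (b, .inl i) = (b == g i) := rfl

@[simp] theorem selLit_inr {r : ℕ} (g : Fin r → Bool) (b : Bool) (i : Fin r) :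
    selLit g (b, .inr i) = true := rfl

namespace IPrime

variable {r s : ℕ} (cl : Fin s → Fin 3 → XLit r) (rkV rkB : StP r s → ℕ)
  (g : Fin r → Bool)

theorem two_le_card_selLit {j : Fin s} (hY : 2 ≤ #{z | (cl j z).2.isRight = true}) :
    2 ≤ #{z | selLit g (cl j z) = true} := by
  refine hY.trans (card_le_card fun z => ?_)
  simp only [mem_filter, mem_univ, true_and]
  rcases cl j z with ⟨b, i | i⟩ <;> simp

theorem card_selLit_eq_false_le_one {j : Fin s}
    (hY : 2 ≤ #{z | (cl j z).2.isRight = true}) :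
    #{z | selLit g (cl j z) = false} ≤ 1 := by
  have hsplit := card_filter_add_card_filter_not (s := univ) fun z => selLit g (cl j z) = true
  simp only [Bool.not_eq_true, card_univ, Fintype.card_fin] at hsplit
  have := two_le_card_selLit cl g hY
  omega

theorem matchSpec_isMatching : (IPrime r s cl rkV rkB).IsMatching (matchSpec r s cl g) := by
  rintro (⟨b, i | i⟩ | j | k) w h
  · simp only [matchSpec] at h
    split_ifs at h <;> cases h <;> simp [IPrime]
  · cases h
    simp [IPrime]
  · simp only [matchSpec] at h
    split_ifs at h
    cases h
    simp [IPrime]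
  · fin_cases k <;> cases h <;> simp [IPrime]

theorem card_assigned_v :
    #((IPrime r s cl rkV rkB).assigned (matchSpec r s cl g) 0) ≤ 3 * r + s :=
  calc _ = r + 2 * r + #{j | #{z | selLit g (cl j z) = true} = 2} := by
        rw [SMTI.card_assigned_eq_sum, sum_univ_StP]
        simp [matchSpec, ite_eq_true_add_ite_eq_false, mul_comm]
    _ ≤ 3 * r + s := by
        have := (card_filter_le univ fun j => #{z | selLit g (cl j z) = true} = 2).trans_eq
          (card_fin s)
        omega

theorem typeLoad_v_varX (i : Fin r) :
    (IPrime r s cl rkV rkB).typeLoad (matchSpec r s cl g) 0 (.inl (.inl i)) = 1 := by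
  rw [SMTI.typeLoad_eq_sum, sum_univ_StP]
  simp [IPrime, matchSpec, Bool.toNat_decide, ite_eq_true_add_ite_eq_false]

theorem typeLoad_v_varY (i : Fin r) :
    (IPrime r s cl rkV rkB).typeLoad (matchSpec r s cl g) 0 (.inl (.inr i)) = 2 := by
  rw [SMTI.typeLoad_eq_sum, sum_univ_StP]
  simp [IPrime, matchSpec, Bool.toNat_decide, sum_add_distrib]

theorem typeLoad_v_clause {j : Fin s} (hj : Function.Injective (cl j))
    (hY : 2 ≤ #{z | (cl j z).2.isRight = true}) :
    (IPrime r s cl rkV rkB).typeLoad (matchSpec r s cl g) 0 (.inr (.inl j)) = 3 :=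
  calc _ = #{z | selLit g (cl j z) = true} +
          if #{z | selLit g (cl j z) = true} = 2 then 1 else 0 := by
        rw [SMTI.typeLoad_eq_sum, Fintype.sum_sum_type, Fintype.sum_sum_type, Fin.sum_univ_four,
          Fintype.sum_eq_single (a := j) fun x hx => by simp [IPrime, hx]]
        simp [IPrime, matchSpec, Bool.toNat_decide, sum_ite_ite_exists_eq_card hj]
    _ = 3 := by
        have := two_le_card_selLit cl g hY
        have := (card_filter_le univ fun z => selLit g (cl j z) = true).trans_eq (card_fin 3)
        split_ifs <;> omega

theorem typeLoad_v_special (k : Fin 2) :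
    (IPrime r s cl rkV rkB).typeLoad (matchSpec r s cl g) 0 (.inr (.inr k)) = 0 := by
  rw [SMTI.typeLoad_eq_sum, sum_univ_StP]
  simp [IPrime, matchSpec]

theorem card_assigned_b :
    #((IPrime r s cl rkV rkB).assigned (matchSpec r s cl g) 3) = r + 2 := by
  rw [SMTI.card_assigned_eq_sum, sum_univ_StP]
  simp [matchSpec, ite_eq_false_add_ite_eq_true]

theorem typeLoad_b_varX (i : Fin r) :
    (IPrime r s cl rkV rkB).typeLoad (matchSpec r s cl g) 3 (.inl (.inl i)) = 1 := by
  rw [SMTI.typeLoad_eq_sum, sum_univ_StP]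
  simp [IPrime, matchSpec, Bool.toNat_decide, ite_eq_false_add_ite_eq_true]

theorem typeLoad_b_varY (i : Fin r) :
    (IPrime r s cl rkV rkB).typeLoad (matchSpec r s cl g) 3 (.inl (.inr i)) = 0 := by
  rw [SMTI.typeLoad_eq_sum, sum_univ_StP]
  simp [IPrime, matchSpec]

theorem typeLoad_b_clause_le {j : Fin s} (hj : Function.Injective (cl j))
    (hY : 2 ≤ #{z | (cl j z).2.isRight = true}) :
    (IPrime r s cl rkV rkB).typeLoad (matchSpec r s cl g) 3 (.inr (.inl j)) ≤ 1 :=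
  calc _ = #{z | selLit g (cl j z) = false} := by
        rw [SMTI.typeLoad_eq_sum, Fintype.sum_sum_type, Fintype.sum_sum_type, Fin.sum_univ_four]
        simp [IPrime, matchSpec, Bool.toNat_decide, sum_ite_ite_exists_eq_card hj]
    _ ≤ 1 := card_selLit_eq_false_le_one cl g hY

theorem typeLoad_b_special (k : Fin 2) :
    (IPrime r s cl rkV rkB).typeLoad (matchSpec r s cl g) 3 (.inr (.inr k)) = 1 := by
  rw [SMTI.typeLoad_eq_sum, sum_univ_StP]
  fin_cases k <;> simp [IPrime, matchSpec]

theorem feasibleAt_v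
    (hY : ∀ j, 2 ≤ #{z | (cl j z).2.isRight = true})
    (hdist : ∀ j, Function.Injective (cl j)) :
    (IPrime r s cl rkV rkB).FeasibleAt (matchSpec r s cl g) 0 := by
  refine ⟨(card_assigned_v cl rkV rkB g).trans_eq (by simp [IPrime]), ?_⟩
  rintro ((i | i) | (j | k))
  · rw [typeLoad_v_varX]; simp [IPrime, quotaV]
  · rw [typeLoad_v_varY]; simp [IPrime, quotaV]
  · rw [typeLoad_v_clause cl rkV rkB g (hdist j) (hY j)]; simp [IPrime, quotaV]
  · rw [typeLoad_v_special]; simp [IPrime, quotaV]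

theorem feasibleAt_b
    (hY : ∀ j, 2 ≤ #{z | (cl j z).2.isRight = true})
    (hdist : ∀ j, Function.Injective (cl j)) :
    (IPrime r s cl rkV rkB).FeasibleAt (matchSpec r s cl g) 3 := by
  refine ⟨(card_assigned_b cl rkV rkB g).trans_le (by simp [IPrime]), ?_⟩
  rintro ((i | i) | (j | k))
  · rw [typeLoad_b_varX]; simp [IPrime]
  · rw [typeLoad_b_varY]; simp [IPrime]
  · exact ⟨by simp [IPrime],
      (typeLoad_b_clause_le cl rkV rkB g (hdist j) (hY j)).trans (by simp [IPrime])⟩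
  · rw [typeLoad_b_special]; simp [IPrime]

theorem assigned_w :
    (IPrime r s cl rkV rkB).assigned (matchSpec r s cl g) 1 = {.inr (.inr 0)} := by
  ext (l | j | k)
  · simp [SMTI.mem_assigned, matchSpec, ite_eq_iff]
  · simp [SMTI.mem_assigned, matchSpec]
  · fin_cases k <;> simp [SMTI.mem_assigned, matchSpec]

theorem assigned_a :
    (IPrime r s cl rkV rkB).assigned (matchSpec r s cl g) 2 = {.inr (.inr 2)} := by
  ext (l | j | k)
  · simp [SMTI.mem_assigned, matchSpec, ite_eq_iff]
  · simp [SMTI.mem_assigned, matchSpec]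
  · fin_cases k <;> simp [SMTI.mem_assigned, matchSpec]

theorem feasibleAt_w : (IPrime r s cl rkV rkB).FeasibleAt (matchSpec r s cl g) 1 :=
  SMTI.feasibleAt_of_assigned_eq_singleton _ _ (assigned_w cl rkV rkB g) (by simp [IPrime])
    fun _ => ⟨by simp [IPrime], (Bool.toNat_le _).trans (by simp [IPrime])⟩

theorem feasibleAt_a : (IPrime r s cl rkV rkB).FeasibleAt (matchSpec r s cl g) 2 :=
  SMTI.feasibleAt_of_assigned_eq_singleton _ _ (assigned_a cl rkV rkB g) (by simp [IPrime])
    fun z => by rcases z with (i | i) | (j | k) <;> simp [IPrime]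

theorem matchSpec_feasible
    (hY : ∀ j, 2 ≤ #{z | (cl j z).2.isRight = true})
    (hdist : ∀ j, Function.Injective (cl j)) :
    (IPrime r s cl rkV rkB).Feasible (matchSpec r s cl g) := by
  rw [SMTI.feasible_iff_forall_feasibleAt]
  intro w
  fin_cases w
  exacts [feasibleAt_v cl rkV rkB g hY hdist, feasibleAt_w cl rkV rkB g, feasibleAt_a cl rkV rkB g,
    feasibleAt_b cl rkV rkB g hY hdist]

end IPrime

theorem stmt7_general (r s : ℕ) (cl : Fin s → Fin 3 → XLit r)
    (hY : ∀ j : Fin s, 2 ≤ (Finset.univ.filter fun z : Fin 3 => (cl j z).2.isRight = true).card)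
    (hdist : ∀ j : Fin s, Function.Injective (cl j))
    (rkV rkB : StP r s → ℕ) :
    (∃ f : StP r s → Option ColP,
        (IPrime r s cl rkV rkB).IsMatching f ∧ (IPrime r s cl rkV rkB).Feasible f) ∧
    (∀ g : Fin r → Bool,
        (IPrime r s cl rkV rkB).IsMatching (matchSpec r s cl g) ∧
        (IPrime r s cl rkV rkB).Feasible (matchSpec r s cl g)) := by
  have hM g := And.intro (IPrime.matchSpec_isMatching cl rkV rkB g)
    (IPrime.matchSpec_feasible cl rkV rkB g hY hdist)
  exact ⟨⟨_, hM fun _ => true⟩, hM⟩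

/-- The instance `I'` always admits a feasible matching; more
specifically, for every choice `X'` (given by `g : Fin r → Bool`) of exactly one
of `{x_i, x̄_i}` for each `i`, the matching `matchSpec` is a feasible matching. -/
theorem stmt7 (r s : ℕ) (cl : Fin s → Fin 3 → XLit r)
    (hY : ∀ j : Fin s, 2 ≤ (Finset.univ.filter fun z : Fin 3 => (cl j z).2.isRight = true).card)
    (hdist : ∀ j : Fin s, Function.Injective (cl j))
    (rkV rkB : StP r s → ℕ)
    (hV : RealizesBlocks (blockV r s) rkV) (hB : RealizesBlocks (blockB r s) rkB) :
    (∃ f : StP r s → Option ColP,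
        (IPrime r s cl rkV rkB).IsMatching f ∧ (IPrime r s cl rkV rkB).Feasible f) ∧
    (∀ g : Fin r → Bool,
        (IPrime r s cl rkV rkB).IsMatching (matchSpec r s cl g) ∧
        (IPrime r s cl rkV rkB).Feasible (matchSpec r s cl g)) :=
  stmt7_general r s cl hY hdist rkV rkB
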